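/- The integral from 0 to π/2 of ln(1 + tan x) dx equals (π/4)·ln 2 + G, where G = ∑_{k=0}^{∞} (-1)^k/(2k+1)^2 is Catalan's constant; moreover the integral from 0 to 1 of ln(1+x^2)/(1+x^2) dx equals (π/2)·ln 2 - G and the integral from 1 to ∞ of ln(1+t^2)/(1+t^2) dt equals (π/2)·ln 2 + G. -/

import Mathlib

open Real MeasureTheory Set intervalIntegral
open scoped Interval

/-!
Substituting `x = tan θ` turns `∫ log (1 + x²) / (1 + x²)` over `(0, 1)` and `(1, ∞)` into
`-2 ∫ log cos` over `(0, π/4)` and `(π/4, π/2)`, i.e. (reflecting) into `-2 Lc` and `-2 Ls` with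
`Ls = ∫₀^{π/4} log sin`, `Lc = ∫₀^{π/4} log cos`. Now `Ls + Lc = ∫₀^{π/2} log sin = -(π/2) log 2`,
while the same substitution gives `Ls - Lc = ∫₀^1 log x / (1 + x²) = -G`, by expanding
`1 / (1 + x²)` as a geometric series and using `∫₀^1 x^n log x = -1/(n+1)²`.
For the first integral, `1 + tan x = √2 cos (x - π/4) / cos x`, so it equals
`(π/4) log 2 + ∫_{-π/4}^{π/4} log cos - ∫₀^{π/2} log cos = (π/4) log 2 + 2 Lc + (π/2) log 2`.
-/

noncomputable def catalanConstant : ℝ := ∑' k : ℕ, (-1 : ℝ) ^ k / (2 * (k : ℝ) + 1) ^ 2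

theorem intervalIntegrable_pow_mul_log (n : ℕ) (a b : ℝ) :
    IntervalIntegrable (fun x => x ^ n * log x) volume a b :=
  intervalIntegrable_log'.continuousOn_mul (continuous_pow n).continuousOn

theorem integral_pow_mul_log_zero_one (n : ℕ) :
    ∫ x in (0:ℝ)..1, x ^ n * log x = -1 / (n + 1) ^ 2 := by
  have hn : (n : ℝ) + 1 ≠ 0 := by positivity
  let F : ℝ → ℝ := fun x => (x ^ (n + 1) * log x * (n + 1) - x ^ (n + 1)) / (n + 1) ^ 2
  -- `x ^ (n + 1) * log x = x ^ n * (x * log x)` is continuous at `0` because `x * log x` is.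
  have hF : Continuous F := by
    have : Continuous fun x : ℝ => x ^ (n + 1) * log x :=
      ((continuous_pow n).mul continuous_mul_log).congr fun x => by
        simp only [Pi.mul_apply]; ring
    fun_prop
  have hF' : ∀ x ∈ Ioo (0:ℝ) 1, HasDerivAt F (x ^ n * log x) x := by
    intro x hx
    have := ((((hasDerivAt_pow (n + 1) x).mul (hasDerivAt_log hx.1.ne')).mul_const ((n:ℝ) + 1))
      |>.sub (hasDerivAt_pow (n + 1) x)).div_const (((n:ℝ) + 1) ^ 2)
    refine this.congr_deriv ?_
    have hx0 := hx.1.ne'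
    rw [Nat.add_sub_cancel]
    push_cast
    field_simp
    ring
  rw [integral_eq_sub_of_hasDerivAt_of_le zero_le_one hF.continuousOn hF'
    (intervalIntegrable_pow_mul_log n 0 1)]
  simp [F]

theorem summable_one_div_two_mul_add_one_sq :
    Summable fun k : ℕ => 1 / (2 * (k : ℝ) + 1) ^ 2 := by
  have := (Real.summable_one_div_nat_pow.mpr one_lt_two).comp_injective
    (i := fun k : ℕ => 2 * k + 1) (fun a b h => by simpa using h)
  simpa [Function.comp_def] using this

theorem integral_log_div_one_add_sq_zero_one :
    ∫ x in (0:ℝ)..1, log x / (1 + x ^ 2) = -catalanConstant := by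
  have hIoo : ∀ f : ℝ → ℝ, ∫ x in (0:ℝ)..1, f x = ∫ x in Ioo 0 1, f x := fun f => by
    rw [integral_of_le zero_le_one, integral_Ioc_eq_integral_Ioo]
  let F : ℕ → ℝ → ℝ := fun k x => (-x ^ 2) ^ k * log x
  have hFk : ∀ k x, F k x = (-1) ^ k * (x ^ (2 * k) * log x) := fun k x => by
    simp only [F]; rw [neg_pow, ← pow_mul]; ring
  have hF : ∀ k, ∫ x in Ioo 0 1, F k x = -((-1) ^ k / (2 * (k : ℝ) + 1) ^ 2) := fun k => by
    simp only [hFk]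
    rw [MeasureTheory.integral_const_mul, ← hIoo, integral_pow_mul_log_zero_one]
    push_cast
    ring
  have hF_norm : ∀ k, ∫ x in Ioo 0 1, ‖F k x‖ = 1 / (2 * (k : ℝ) + 1) ^ 2 := fun k => by
    rw [setIntegral_congr_fun measurableSet_Ioo (g := fun x => -(x ^ (2 * k) * log x)),
      MeasureTheory.integral_neg, ← hIoo, integral_pow_mul_log_zero_one]
    · push_cast; ring
    intro x hx
    simp only [hFk, norm_mul, norm_pow, norm_neg, norm_one, one_pow, one_mul,
      norm_of_nonneg (pow_nonneg hx.1.le _), norm_of_nonpos (log_nonpos hx.1.le hx.2.le)]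
    ring
  have hF_int : ∀ k, Integrable (F k) (volume.restrict (Ioo 0 1)) := fun k => by
    have := ((intervalIntegrable_pow_mul_log (2 * k) 0 1).1.mono_set Ioo_subset_Ioc_self).const_mul
      ((-1) ^ k)
    exact this.congr (ae_of_all _ fun x => (hFk k x).symm)
  have hsum := hasSum_integral_of_summable_integral_norm hF_int
    (by simpa only [hF_norm] using summable_one_div_two_mul_add_one_sq)
  have hgeom : ∀ x ∈ Ioo (0:ℝ) 1, ∑' k, F k x = log x / (1 + x ^ 2) := fun x hx => by
    have hx2 : ‖-x ^ 2‖ < 1 := by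
      rw [norm_neg, norm_of_nonneg (sq_nonneg x)]; nlinarith [hx.1, hx.2]
    rw [tsum_mul_right, tsum_geometric_of_norm_lt_one hx2, sub_neg_eq_add, div_eq_inv_mul]
  rw [hIoo, ← setIntegral_congr_fun measurableSet_Ioo hgeom, ← hsum.tsum_eq, catalanConstant,
    ← tsum_neg]
  simp only [hF]

theorem log_one_add_tan_sq (θ : ℝ) : log (1 + tan θ ^ 2) = -2 * log (cos θ) := by
  by_cases h : cos θ = 0
  · simp [tan_eq_sin_div_cos, h]
  · rw [← inv_inv (1 + tan θ ^ 2), inv_one_add_tan_sq h, log_inv, log_pow]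
    push_cast
    ring

theorem one_add_tan_eq_sqrt_two_mul_cos_sub_pi_div_four_div_cos {x : ℝ} (hx : cos x ≠ 0) :
    1 + tan x = √2 * cos (x - π / 4) / cos x := by
  rw [cos_sub, cos_pi_div_four, sin_pi_div_four, tan_eq_sin_div_cos]
  field_simp
  rw [sq_sqrt zero_le_two]

theorem integral_log_cos_eq_integral_log_sin (a b : ℝ) :
    ∫ x in a..b, log (cos x) = ∫ x in π / 2 - b..π / 2 - a, log (sin x) := by
  simp only [← integral_comp_sub_left, sin_pi_div_two_sub]

theorem integral_log_cos_zero_pi_div_two : ∫ x in 0..π / 2, log (cos x) = -log 2 * π / 2 := by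
  rw [integral_log_cos_eq_integral_log_sin, sub_self, sub_zero, integral_log_sin_zero_pi_div_two]

theorem integral_log_sin_add_integral_log_cos_zero_pi_div_four :
    (∫ x in 0..π / 4, log (sin x)) + ∫ x in 0..π / 4, log (cos x) = -log 2 * π / 2 := by
  rw [integral_log_cos_eq_integral_log_sin, sub_zero, show π / 2 - π / 4 = π / 4 by ring,
    integral_add_adjacent_intervals (f := fun x => log (sin x)) intervalIntegrable_log_sin
      intervalIntegrable_log_sin,
    integral_log_sin_zero_pi_div_two]

theorem integral_div_one_add_sq_eq_integral_comp_tan (h : ℝ → ℝ) :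
    ∫ x in (0:ℝ)..1, h x / (1 + x ^ 2) = ∫ θ in 0..π / 4, h (tan θ) := by
  have hcos : ∀ θ ∈ [[0, π / 4]], 0 < cos θ := fun θ hθ => by
    rw [uIcc_of_le (by positivity)] at hθ
    exact cos_pos_of_mem_Ioo ⟨by linarith [hθ.1, pi_pos], by linarith [hθ.2, pi_pos]⟩
  have := integral_comp_mul_deriv_of_deriv_nonneg (g := fun x => h x / (1 + x ^ 2))
    (continuousOn_tan.mono fun θ hθ => (hcos θ hθ).ne')
    (fun θ hθ => hasDerivAt_tan (hcos θ (Ioo_subset_Icc_self hθ)).ne') (fun θ _ => by positivity)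
  rw [tan_zero, tan_pi_div_four] at this
  rw [← this]
  refine integral_congr fun θ hθ => ?_
  have hc := hcos θ hθ
  simp only [Function.comp_apply, ← inv_one_add_tan_sq hc.ne']
  field_simp

theorem image_tan_Ioo_pi_div_four_pi_div_two : tan '' Ioo (π / 4) (π / 2) = Ioi 1 := by
  ext y
  constructor
  · rintro ⟨θ, hθ, rfl⟩
    rw [mem_Ioi, ← tan_pi_div_four]
    exact tan_lt_tan_of_lt_of_lt_pi_div_two (by linarith [pi_pos]) hθ.2 hθ.1
  · intro hy
    refine ⟨arctan y, ⟨?_, arctan_lt_pi_div_two y⟩, tan_arctan y⟩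
    rw [← arctan_one]
    exact arctan_strictMono hy

theorem integral_Ioi_one_div_one_add_sq_eq_integral_comp_tan (h : ℝ → ℝ) :
    ∫ t in Ioi 1, h t / (1 + t ^ 2) = ∫ θ in π / 4..π / 2, h (tan θ) := by
  have hcos : ∀ θ ∈ Ioo (π / 4) (π / 2), 0 < cos θ := fun θ hθ =>
    cos_pos_of_mem_Ioo ⟨by linarith [hθ.1, pi_pos], hθ.2⟩
  rw [← image_tan_Ioo_pi_div_four_pi_div_two, integral_image_eq_integral_abs_deriv_smul
    measurableSet_Ioo (fun θ hθ => (hasDerivAt_tan (hcos θ hθ).ne').hasDerivWithinAt)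
    (injOn_tan.mono (Ioo_subset_Ioo (by linarith [pi_pos]) le_rfl)),
    integral_of_le (by linarith [pi_pos]), integral_Ioc_eq_integral_Ioo]
  refine setIntegral_congr_fun measurableSet_Ioo fun θ hθ => ?_
  have hc := hcos θ hθ
  rw [smul_eq_mul, abs_of_pos (one_div_pos.mpr (pow_pos hc 2)), ← inv_one_add_tan_sq hc.ne']
  field_simp

theorem integral_log_sin_sub_integral_log_cos_zero_pi_div_four :
    (∫ x in 0..π / 4, log (sin x)) - ∫ x in 0..π / 4, log (cos x) = -catalanConstant := by
  rw [← integral_sub (f := fun x => log (sin x)) (g := fun x => log (cos x))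
      intervalIntegrable_log_sin intervalIntegrable_log_cos,
    ← integral_log_div_one_add_sq_zero_one, integral_div_one_add_sq_eq_integral_comp_tan]
  refine integral_congr_Ioo_of_le (by positivity) fun θ hθ => ?_
  have hs : 0 < sin θ := sin_pos_of_pos_of_lt_pi hθ.1 (by linarith [hθ.2, pi_pos])
  have hc : 0 < cos θ := cos_pos_of_mem_Ioo ⟨by linarith [hθ.1, pi_pos], by linarith [hθ.2, pi_pos]⟩
  rw [tan_eq_sin_div_cos, log_div hs.ne' hc.ne']

theorem integral_log_one_add_sq_div_one_add_sq_zero_one :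
    ∫ x in (0:ℝ)..1, log (1 + x ^ 2) / (1 + x ^ 2) = π / 2 * log 2 - catalanConstant := by
  rw [integral_div_one_add_sq_eq_integral_comp_tan (fun x => log (1 + x ^ 2))]
  simp only [log_one_add_tan_sq, intervalIntegral.integral_const_mul]
  linarith [integral_log_sin_add_integral_log_cos_zero_pi_div_four,
    integral_log_sin_sub_integral_log_cos_zero_pi_div_four]

theorem integral_log_one_add_sq_div_one_add_sq_Ioi_one :
    ∫ t in Ioi (1:ℝ), log (1 + t ^ 2) / (1 + t ^ 2) = π / 2 * log 2 + catalanConstant := by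
  rw [integral_Ioi_one_div_one_add_sq_eq_integral_comp_tan (fun x => log (1 + x ^ 2))]
  simp only [log_one_add_tan_sq, intervalIntegral.integral_const_mul]
  rw [integral_log_cos_eq_integral_log_sin, sub_self, show π / 2 - π / 4 = π / 4 by ring]
  linarith [integral_log_sin_add_integral_log_cos_zero_pi_div_four,
    integral_log_sin_sub_integral_log_cos_zero_pi_div_four]

theorem integral_log_one_add_tan_zero_pi_div_two :
    ∫ x in 0..π / 2, log (1 + tan x) = π / 4 * log 2 + catalanConstant := by
  have hsplit : ∀ x ∈ Ioo 0 (π / 2),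
      log (1 + tan x) = log 2 / 2 + log (cos (x - π / 4)) - log (cos x) := fun x hx => by
    have hc : 0 < cos x := cos_pos_of_mem_Ioo ⟨by linarith [hx.1, pi_pos], hx.2⟩
    have hc' : 0 < cos (x - π / 4) :=
      cos_pos_of_mem_Ioo ⟨by linarith [hx.1, pi_pos], by linarith [hx.2, pi_pos]⟩
    rw [one_add_tan_eq_sqrt_two_mul_cos_sub_pi_div_four_div_cos hc.ne', log_div (by positivity)
      hc.ne', log_mul (by positivity) hc'.ne', log_sqrt zero_le_two]
  have hshift : ∫ x in 0..π / 2, log (cos (x - π / 4)) = 2 * ∫ x in 0..π / 4, log (cos x) := by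
    have heven : ∫ x in -(π / 4)..0, log (cos x) = ∫ x in 0..π / 4, log (cos x) := by
      simpa using (integral_comp_neg (a := 0) (b := π / 4) fun x => log (cos x)).symm
    rw [integral_comp_sub_right (fun x => log (cos x)), zero_sub,
      show π / 2 - π / 4 = π / 4 by ring, ← integral_add_adjacent_intervals (b := 0)
      (f := fun x => log (cos x)) intervalIntegrable_log_cos intervalIntegrable_log_cos, heven]
    ring
  have hshift_int : IntervalIntegrable (fun x => log (cos (x - π / 4))) volume 0 (π / 2) := by
    have := (intervalIntegrable_log_cos (a := 0 - π / 4) (b := π / 2 - π / 4)).comp_sub_right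
      (π / 4)
    rwa [sub_add_cancel, sub_add_cancel] at this
  rw [integral_congr_Ioo_of_le (by positivity) hsplit, integral_sub (g := fun x => log (cos x)) _
      intervalIntegrable_log_cos,
    integral_add intervalIntegrable_const hshift_int,
    hshift, intervalIntegral.integral_const, integral_log_cos_zero_pi_div_two]
  · simp only [sub_zero, smul_eq_mul]
    linarith [integral_log_sin_add_integral_log_cos_zero_pi_div_four,
      integral_log_sin_sub_integral_log_cos_zero_pi_div_four]
  · exact intervalIntegrable_const.add hshift_int

/-- GR 4.227.10, 4.295.5 and 4.295.6:
`∫_0^{π/2} ln(1 + tan x) dx = (π/4) ln 2 + G`,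
`∫_0^1 ln(1+x²)/(1+x²) dx = (π/2) ln 2 - G`, and
`∫_1^∞ ln(1+t²)/(1+t²) dt = (π/2) ln 2 + G`, where `G` is Catalan's constant. -/
theorem integral_log_one_add_tan_and_friends :
    (∫ x in (0:ℝ)..(Real.pi / 2), Real.log (1 + Real.tan x) =
      (Real.pi / 4) * Real.log 2 + ∑' k : ℕ, (-1 : ℝ) ^ k / (2 * (k : ℝ) + 1) ^ 2) ∧
    (∫ x in (0:ℝ)..1, Real.log (1 + x ^ 2) / (1 + x ^ 2) =
      (Real.pi / 2) * Real.log 2 - ∑' k : ℕ, (-1 : ℝ) ^ k / (2 * (k : ℝ) + 1) ^ 2) ∧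
    (∫ t in Set.Ioi (1:ℝ), Real.log (1 + t ^ 2) / (1 + t ^ 2) =
      (Real.pi / 2) * Real.log 2 + ∑' k : ℕ, (-1 : ℝ) ^ k / (2 * (k : ℝ) + 1) ^ 2) :=
  ⟨integral_log_one_add_tan_zero_pi_div_two, integral_log_one_add_sq_div_one_add_sq_zero_one,
    integral_log_one_add_sq_div_one_add_sq_Ioi_one⟩
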